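/- Let x^{(n)} be the projected gradient iterates satisfying Condition (B), and suppose x^# is a weak accumulation point of (x^{(n)}). Then x^# minimizes D(x) = ‖Kx - y‖² over B_R. -/

import Mathlib

/-!
The iterates are nearest points of the convex set `B_R`, so they satisfy the variational
inequality of the projection. Tested against the previous iterate, and combined with Condition (B),
it shows that `D` decreases by at least `‖x⁽ⁿ⁺¹⁾ - x⁽ⁿ⁾‖² / β̄` per step; hence the steps are
square summable and tend to `0`, and the shifted subsequence `x⁽ᵠ⁽ᵏ⁾⁺¹⁾` still converges weakly
to `x#`. Tested against an arbitrary `w ∈ B_R`, the variational inequality gives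
`⟪y - K x⁽ⁿ⁺¹⁾, K w - K x⁽ⁿ⁺¹⁾⟫ ≤ O(‖x⁽ⁿ⁺¹⁾ - x⁽ⁿ⁾‖)`, and in the weak limit
`⟪y - K x#, K w - K x#⟫ ≤ 0`, the first-order optimality condition of `D` at `x#`.
-/

open scoped ENNReal NNReal

open Filter Topology

/-- The `ℓ¹`-ball of radius `R` inside `ℓ²(I)`. -/
noncomputable def l1Ball (I : Type*) (R : ℝ) : Set (lp (fun _ : I => ℝ) 2) :=
  {x | (∑' i, (‖x i‖₊ : ℝ≥0∞)) ≤ ENNReal.ofReal R}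

section l1Ball

variable {I : Type*} {R : ℝ}

-- `ENNReal.ofReal R = 0` for `R < 0`, so `|R|` rather than `R` bounds the ball for every `R`.
lemma sum_norm_le_abs_of_mem_l1Ball {f : lp (fun _ : I => ℝ) 2} (hf : f ∈ l1Ball I R)
    (s : Finset I) : ∑ i ∈ s, ‖f i‖ ≤ |R| := by
  rw [← ENNReal.ofReal_le_ofReal_iff (abs_nonneg R),
    ENNReal.ofReal_sum_of_nonneg fun i _ => norm_nonneg _]
  simp only [ofReal_norm, enorm_eq_nnnorm]
  exact (ENNReal.sum_le_tsum s).trans (hf.trans (ENNReal.ofReal_le_ofReal (le_abs_self R)))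

lemma norm_le_abs_of_mem_l1Ball {f : lp (fun _ : I => ℝ) 2} (hf : f ∈ l1Ball I R) :
    ‖f‖ ≤ |R| :=
  lp.norm_le_of_forall_sum_le (by norm_num) (abs_nonneg R) fun s => by
    simp only [ENNReal.toReal_ofNat, Real.rpow_two]
    calc ∑ i ∈ s, ‖f i‖ ^ 2 ≤ (∑ i ∈ s, ‖f i‖) ^ 2 :=
          Finset.sum_sq_le_sq_sum_of_nonneg fun i _ => norm_nonneg _
      _ ≤ |R| ^ 2 := pow_le_pow_left₀ (Finset.sum_nonneg fun i _ => norm_nonneg _)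
          (sum_norm_le_abs_of_mem_l1Ball hf s) 2

lemma convex_l1Ball : Convex ℝ (l1Ball I R) := by
  intro f hf g hg a b ha hb hab
  simp only [l1Ball, Set.mem_ofPred_eq, ← enorm_eq_nnnorm] at hf hg ⊢
  calc ∑' i, ‖(a • f + b • g) i‖ₑ ≤ ∑' i, (‖a‖ₑ * ‖f i‖ₑ + ‖b‖ₑ * ‖g i‖ₑ) :=
        ENNReal.tsum_le_tsum fun i => by
          simpa only [enorm_smul, lp.coeFn_add, lp.coeFn_smul, Pi.add_apply, Pi.smul_apply]
            using enorm_add_le (a • f i) (b • g i)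
    _ = ‖a‖ₑ * ∑' i, ‖f i‖ₑ + ‖b‖ₑ * ∑' i, ‖g i‖ₑ := by
        rw [ENNReal.tsum_add, ENNReal.tsum_mul_left, ENNReal.tsum_mul_left]
    _ ≤ ‖a‖ₑ * ENNReal.ofReal R + ‖b‖ₑ * ENNReal.ofReal R := by gcongr
    _ = ENNReal.ofReal R := by
        rw [← add_mul, Real.enorm_of_nonneg ha, Real.enorm_of_nonneg hb,
          ← ENNReal.ofReal_add ha hb, hab, ENNReal.ofReal_one, one_mul]

lemma mem_l1Ball_of_tendsto_apply {α : Type*} {l : Filter α} [l.NeBot]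
    {f : α → lp (fun _ : I => ℝ) 2} {g : lp (fun _ : I => ℝ) 2}
    (hfg : ∀ i, Tendsto (fun k => f k i) l (𝓝 (g i))) (hf : ∀ᶠ k in l, f k ∈ l1Ball I R) :
    g ∈ l1Ball I R :=
  have hclosed : IsClosed {h : I → ℝ | ∑' i, (‖h i‖₊ : ℝ≥0∞) ≤ ENNReal.ofReal R} :=
    (lowerSemicontinuous_tsum fun i =>
      (continuous_apply i).enorm.lowerSemicontinuous).isClosed_preimage _
  hclosed.mem_of_tendsto (tendsto_pi_nhds.2 hfg) hf

end l1Ball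

section WeakConvergence

variable {α E F : Type*} [NormedAddCommGroup E] [InnerProductSpace ℝ E]
  [NormedAddCommGroup F] [InnerProductSpace ℝ F] {l : Filter α}

def WeakTendsto (u : α → E) (l : Filter α) (s : E) : Prop :=
  ∀ z : E, Tendsto (fun k => (inner ℝ (u k) z : ℝ)) l (𝓝 (inner ℝ s z))

namespace WeakTendsto

variable {u v : α → E} {s : E}

lemma tendsto_inner_left (hu : WeakTendsto u l s) (z : E) :
    Tendsto (fun k => (inner ℝ z (u k) : ℝ)) l (𝓝 (inner ℝ z s)) := by
  simpa only [real_inner_comm z] using hu z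

lemma const_sub (hu : WeakTendsto u l s) (c : E) : WeakTendsto (fun k => c - u k) l (c - s) :=
  fun z => by simpa only [inner_sub_left] using tendsto_const_nhds.sub (hu z)

lemma of_tendsto_sub (hu : WeakTendsto u l s) (hvu : Tendsto (fun k => v k - u k) l (𝓝 0)) :
    WeakTendsto v l s := fun z => by
  simpa only [inner_sub_left, add_sub_cancel, inner_zero_left, add_zero] using
    (hu z).add (hvu.inner tendsto_const_nhds : Tendsto (fun k => inner ℝ (v k - u k) z) l _)

lemma map [CompleteSpace E] [CompleteSpace F] (hu : WeakTendsto u l s) (K : E →L[ℝ] F) :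
    WeakTendsto (fun k => K (u k)) l (K s) := fun z => by
  simpa only [ContinuousLinearMap.adjoint_inner_right] using hu (ContinuousLinearMap.adjoint K z)

lemma tendsto_apply {I : Type*} {u : α → lp (fun _ : I => ℝ) 2} {s : lp (fun _ : I => ℝ) 2}
    (hu : WeakTendsto u l s) (i : I) : Tendsto (fun k => u k i) l (𝓝 (s i)) := by
  classical
  simpa only [lp.inner_single_right, RCLike.inner_apply, RCLike.conj_to_real, one_mul] using
    hu (lp.single 2 i 1)

/-- `⟪y - aₖ, c - aₖ⟫` is not weakly continuous in `aₖ`, but it exceeds the affine function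
`⟪y - aₖ, c - b⟫ + ⟪y - b, b - aₖ⟫` by `‖b - aₖ‖²`. -/
lemma real_inner_sub_sub_le_zero [l.NeBot] {a : α → F} {b y c : F} (ha : WeakTendsto a l b)
    {ε : α → ℝ} (hε : Tendsto ε l (𝓝 0)) (h : ∀ k, (inner ℝ (y - a k) (c - a k) : ℝ) ≤ ε k) :
    (inner ℝ (y - b) (c - b) : ℝ) ≤ 0 := by
  have hlower : ∀ k, (inner ℝ (y - a k) (c - b) : ℝ) + inner ℝ (y - b) (b - a k) ≤ ε k := by
    intro k
    have hgap : (inner ℝ (y - a k) (c - a k) : ℝ) -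
        (inner ℝ (y - a k) (c - b) + inner ℝ (y - b) (b - a k)) = ‖b - a k‖ ^ 2 := by
      rw [sub_add_eq_sub_sub, ← inner_sub_right, sub_sub_sub_cancel_left, ← inner_sub_left,
        sub_sub_sub_cancel_left, real_inner_self_eq_norm_sq]
    nlinarith [h k, sq_nonneg ‖b - a k‖]
  have hlim := ((ha.const_sub y) (c - b)).add ((ha.const_sub b).tendsto_inner_left (y - b))
  rw [sub_self, inner_zero_right, add_zero] at hlim
  exact le_of_tendsto_of_tendsto' hlim hε hlower

end WeakTendsto

end WeakConvergence

lemma norm_sub_sq_le_of_real_inner_le_zero {F : Type*} [NormedAddCommGroup F]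
    [InnerProductSpace ℝ F] {b y c : F} (h : (inner ℝ (y - b) (c - b) : ℝ) ≤ 0) :
    ‖b - y‖ ^ 2 ≤ ‖c - y‖ ^ 2 := by
  have hexp : ‖c - y‖ ^ 2 = ‖c - b‖ ^ 2 + 2 * inner ℝ (c - b) (b - y) + ‖b - y‖ ^ 2 := by
    rw [← norm_add_sq_real, sub_add_sub_cancel]
  have hinner : (inner ℝ (c - b) (b - y) : ℝ) = -inner ℝ (y - b) (c - b) := by
    rw [← neg_sub y b, inner_neg_right, real_inner_comm]
  nlinarith [sq_nonneg ‖c - b‖]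

lemma tendsto_zero_of_sq_norm_le_mul_sub_succ {E : Type*} [NormedAddCommGroup E]
    {v : ℕ → E} {d : ℕ → ℝ} {c : ℝ} (hc : 0 ≤ c) (hd : ∀ n, 0 ≤ d n)
    (h : ∀ n, ‖v n‖ ^ 2 ≤ c * (d n - d (n + 1))) : Tendsto v atTop (𝓝 0) := by
  have hsum : Summable fun n => ‖v n‖ ^ 2 := by
    refine summable_of_sum_range_le (c := c * d 0) (fun n => sq_nonneg _) fun N => ?_
    calc ∑ n ∈ Finset.range N, ‖v n‖ ^ 2 ≤ ∑ n ∈ Finset.range N, c * (d n - d (n + 1)) :=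
          Finset.sum_le_sum fun n _ => h n
      _ = c * (d 0 - d N) := by rw [← Finset.mul_sum, Finset.sum_range_sub']
      _ ≤ c * d 0 := mul_le_mul_of_nonneg_left (by linarith [hd N]) hc
  have hsq := hsum.tendsto_atTop_zero.sqrt
  simp only [Real.sqrt_sq (norm_nonneg _), Real.sqrt_zero] at hsq
  exact tendsto_zero_iff_norm_tendsto_zero.2 hsq

lemma Convex.real_inner_sub_le_zero_of_isMinOn {E : Type*} [NormedAddCommGroup E]
    [InnerProductSpace ℝ E] {C : Set E} (hC : Convex ℝ C) {t v w : E} (hv : v ∈ C)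
    (hmin : IsMinOn (fun w => ‖w - t‖) C v) (hw : w ∈ C) :
    (inner ℝ (t - v) (w - v) : ℝ) ≤ 0 := by
  have : Nonempty C := ⟨⟨v, hv⟩⟩
  refine (norm_eq_iInf_iff_real_inner_le_zero hC hv).1 (le_antisymm ?_ ?_) w hw
  · exact le_ciInf fun w' => by simpa only [norm_sub_rev t] using isMinOn_iff.1 hmin w' w'.2
  · exact ciInf_le ⟨0, by rintro _ ⟨w', rfl⟩; exact norm_nonneg _⟩ (⟨v, hv⟩ : C)

section ProjectedGradient

variable {E F : Type*} [NormedAddCommGroup E] [InnerProductSpace ℝ E] [CompleteSpace E]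
  [NormedAddCommGroup F] [InnerProductSpace ℝ F] [CompleteSpace F]
  {K : E →L[ℝ] F} {y : F} {C : Set E} {u v w : E} {β : ℝ}

variable (hC : Convex ℝ C) (hv : v ∈ C)
  (hmin : IsMinOn (fun w => ‖w - (u + β • ContinuousLinearMap.adjoint K (y - K u))‖) C v)
include hC hv hmin

lemma sq_norm_sub_le_mul_sub_of_isMinOn (hu : u ∈ C) {r : ℝ} (hr : r ≤ 1)
    (hB : β * ‖K (v - u)‖ ^ 2 ≤ r * ‖v - u‖ ^ 2) :
    ‖v - u‖ ^ 2 ≤ β * (‖K u - y‖ ^ 2 - ‖K v - y‖ ^ 2) := by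
  have hvi := hC.real_inner_sub_le_zero_of_isMinOn hv hmin hu
  have hexp : (inner ℝ (u + β • ContinuousLinearMap.adjoint K (y - K u) - v) (u - v) : ℝ) =
      ‖v - u‖ ^ 2 - β * inner ℝ (y - K u) (K (v - u)) := by
    rw [show u + β • ContinuousLinearMap.adjoint K (y - K u) - v =
        β • ContinuousLinearMap.adjoint K (y - K u) - (v - u) by abel, ← neg_sub v u,
      inner_neg_right, inner_sub_left, real_inner_smul_left,
      ContinuousLinearMap.adjoint_inner_left, real_inner_self_eq_norm_sq]
    ring
  have hD : ‖K v - y‖ ^ 2 =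
      ‖K u - y‖ ^ 2 - 2 * inner ℝ (y - K u) (K (v - u)) + ‖K (v - u)‖ ^ 2 := by
    rw [show K v - y = (K u - y) + K (v - u) by rw [map_sub]; abel, norm_add_sq_real,
      ← neg_sub y (K u), inner_neg_left]
    ring
  have hr' : r * ‖v - u‖ ^ 2 ≤ ‖v - u‖ ^ 2 := mul_le_of_le_one_left (sq_nonneg _) hr
  rw [hD]
  linarith

lemma real_inner_sub_le_of_isMinOn (hβ : 1 ≤ β) (hw : w ∈ C) :
    (inner ℝ (y - K v) (K w - K v) : ℝ) ≤ (1 + ‖K‖ ^ 2) * ‖v - u‖ * ‖w - v‖ := by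
  have hvi := hC.real_inner_sub_le_zero_of_isMinOn hv hmin hw
  have hexp : (inner ℝ (u + β • ContinuousLinearMap.adjoint K (y - K u) - v) (w - v) : ℝ) =
      β * inner ℝ (y - K u) (K (w - v)) - inner ℝ (v - u) (w - v) := by
    rw [show u + β • ContinuousLinearMap.adjoint K (y - K u) - v =
        β • ContinuousLinearMap.adjoint K (y - K u) - (v - u) by abel, inner_sub_left,
      real_inner_smul_left, ContinuousLinearMap.adjoint_inner_left]
  have hbound : 0 ≤ ‖v - u‖ * ‖w - v‖ := by positivity
  have ht : (inner ℝ (y - K u) (K (w - v)) : ℝ) ≤ ‖v - u‖ * ‖w - v‖ := by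
    have hβt : β * inner ℝ (y - K u) (K (w - v)) ≤ ‖v - u‖ * ‖w - v‖ := by
      linarith [real_inner_le_norm (v - u) (w - v)]
    rcases le_or_gt (inner ℝ (y - K u) (K (w - v)) : ℝ) 0 with h | h
    · exact h.trans hbound
    · nlinarith
  have hsplit : (inner ℝ (y - K v) (K w - K v) : ℝ) =
      inner ℝ (y - K u) (K (w - v)) - inner ℝ (K (v - u)) (K (w - v)) := by
    rw [show y - K u = (y - K v) + K (v - u) by rw [map_sub]; abel, inner_add_left, map_sub]
    ring
  have hK : ‖K (v - u)‖ * ‖K (w - v)‖ ≤ (‖K‖ * ‖v - u‖) * (‖K‖ * ‖w - v‖) :=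
    mul_le_mul (K.le_opNorm _) (K.le_opNorm _) (norm_nonneg _) (by positivity)
  have hcross : -(‖K‖ ^ 2 * (‖v - u‖ * ‖w - v‖)) ≤ (inner ℝ (K (v - u)) (K (w - v)) : ℝ) :=
    calc -(‖K‖ ^ 2 * (‖v - u‖ * ‖w - v‖)) ≤ -(‖K (v - u)‖ * ‖K (w - v)‖) := by linarith
      _ ≤ -|(inner ℝ (K (v - u)) (K (w - v)) : ℝ)| :=
          neg_le_neg (abs_real_inner_le_norm _ _)
      _ ≤ _ := neg_abs_le _
  rw [hsplit]
  linarith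

end ProjectedGradient

theorem stmt17_general {I : Type*} {H : Type*} [NormedAddCommGroup H]
    [InnerProductSpace ℝ H] [CompleteSpace H]
    (K : lp (fun _ : I => ℝ) 2 →L[ℝ] H) (y : H) (R : ℝ)
    (r : ℝ) (hr1 : r < 1)
    (β : ℕ → ℝ) (βbar : ℝ) (hβ1 : ∀ n, 1 ≤ β n) (hβ2 : ∀ n, β n ≤ βbar)
    (x : ℕ → lp (fun _ : I => ℝ) 2)
    (hiter : ∀ n : ℕ, x (n + 1) ∈ l1Ball I R ∧
      ∀ w ∈ l1Ball I R,
        ‖x (n + 1) - (x n + β n • (ContinuousLinearMap.adjoint K) (y - K (x n)))‖ ≤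
          ‖w - (x n + β n • (ContinuousLinearMap.adjoint K) (y - K (x n)))‖)
    (hB2 : ∀ n : ℕ, β n * ‖K (x (n + 1) - x n)‖ ^ 2 ≤ r * ‖x (n + 1) - x n‖ ^ 2)
    (xsharp : lp (fun _ : I => ℝ) 2) (φ : ℕ → ℕ) (hφ : StrictMono φ)
    (hweak : ∀ z : lp (fun _ : I => ℝ) 2,
      Filter.Tendsto (fun k : ℕ => (inner ℝ (x (φ k)) z : ℝ)) Filter.atTop
        (nhds (inner ℝ xsharp z : ℝ))) :
    xsharp ∈ l1Ball I R ∧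
    ∀ w ∈ l1Ball I R, ‖K xsharp - y‖ ^ 2 ≤ ‖K w - y‖ ^ 2 := by
  have hmin (n : ℕ) : IsMinOn
      (fun w => ‖w - (x n + β n • ContinuousLinearMap.adjoint K (y - K (x n)))‖) (l1Ball I R)
      (x (n + 1)) := isMinOn_iff.2 (hiter n).2
  have hdescent n : ‖x (n + 2) - x (n + 1)‖ ^ 2 ≤
      βbar * (‖K (x (n + 1)) - y‖ ^ 2 - ‖K (x (n + 2)) - y‖ ^ 2) := by
    have h := sq_norm_sub_le_mul_sub_of_isMinOn convex_l1Ball (hiter (n + 1)).1 (hmin (n + 1))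
      (hiter n).1 hr1.le (hB2 (n + 1))
    have hdec := nonneg_of_mul_nonneg_right ((sq_nonneg _).trans h)
      (zero_lt_one.trans_le (hβ1 _))
    exact h.trans (mul_le_mul_of_nonneg_right (hβ2 _) hdec)
  have hstep : Tendsto (fun n => x (n + 1) - x n) atTop (𝓝 0) :=
    (tendsto_add_atTop_iff_nat 1).1 <| tendsto_zero_of_sq_norm_le_mul_sub_succ
      (zero_le_one.trans ((hβ1 0).trans (hβ2 0)))
      (fun n => sq_nonneg _) hdescent
  have hstepφ := hstep.comp hφ.tendsto_atTop
  have hu : WeakTendsto (fun k => x (φ k + 1)) atTop xsharp :=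
    WeakTendsto.of_tendsto_sub hweak hstepφ
  refine ⟨mem_l1Ball_of_tendsto_apply hu.tendsto_apply (Eventually.of_forall fun k => (hiter _).1),
    fun w hw => norm_sub_sq_le_of_real_inner_le_zero ((hu.map K).real_inner_sub_sub_le_zero
      (ε := fun k => (1 + ‖K‖ ^ 2) * ‖x (φ k + 1) - x (φ k)‖ * (‖w‖ + |R|)) ?_ fun k => ?_)⟩
  · simpa using (hstepφ.norm.const_mul _).mul_const (‖w‖ + |R|)
  · refine (real_inner_sub_le_of_isMinOn convex_l1Ball (hiter _).1 (hmin _) (hβ1 _) hw).trans ?_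
    gcongr
    exact (norm_sub_le _ _).trans (by gcongr; exact norm_le_abs_of_mem_l1Ball (hiter _).1)

/-- If the projected gradient iterates satisfy Condition (B) and `xsharp` is a weak
accumulation point of the sequence `(x n)` (weak limit of a subsequence), then `xsharp`
minimizes `D(x) = ‖Kx - y‖²` over `B_R`. -/
theorem stmt17 {I : Type*} [Countable I] {H : Type*} [NormedAddCommGroup H]
    [InnerProductSpace ℝ H] [CompleteSpace H]
    (K : lp (fun _ : I => ℝ) 2 →L[ℝ] H) (hK : ‖K‖ < 1) (y : H) (R : ℝ) (hR : 0 < R)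
    (r : ℝ) (hr : r = ‖(ContinuousLinearMap.adjoint K).comp K‖) (hr1 : r < 1)
    (β : ℕ → ℝ) (βbar : ℝ) (hβ1 : ∀ n, 1 ≤ β n) (hβ2 : ∀ n, β n ≤ βbar)
    (x : ℕ → lp (fun _ : I => ℝ) 2)
    (hiter : ∀ n : ℕ, x (n + 1) ∈ l1Ball I R ∧
      ∀ w ∈ l1Ball I R,
        ‖x (n + 1) - (x n + β n • (ContinuousLinearMap.adjoint K) (y - K (x n)))‖ ≤
          ‖w - (x n + β n • (ContinuousLinearMap.adjoint K) (y - K (x n)))‖)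
    (hB2 : ∀ n : ℕ, β n * ‖K (x (n + 1) - x n)‖ ^ 2 ≤ r * ‖x (n + 1) - x n‖ ^ 2)
    (xsharp : lp (fun _ : I => ℝ) 2) (φ : ℕ → ℕ) (hφ : StrictMono φ)
    (hweak : ∀ z : lp (fun _ : I => ℝ) 2,
      Filter.Tendsto (fun k : ℕ => (inner ℝ (x (φ k)) z : ℝ)) Filter.atTop
        (nhds (inner ℝ xsharp z : ℝ))) :
    xsharp ∈ l1Ball I R ∧
    ∀ w ∈ l1Ball I R, ‖K xsharp - y‖ ^ 2 ≤ ‖K w - y‖ ^ 2 :=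
  stmt17_general K y R r hr1 β βbar hβ1 hβ2 x hiter hB2 xsharp φ hφ hweak
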